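/- Fix ω ∈ ℂ ∖ ℝ_{≤0} and η ∈ ℂ. There exist real constants k > 0 and δ > 0 such that for every w ∈ ℂ ∖ ℝ_{≤0} with 0 < |w| < δ and with (w+η)/ω not a nonpositive integer, one has |w|^k < |Λ(w,η|ω)| < |w|^{−k}. -/

import Mathlib

/-! Near `w = 0` the argument `z = (w + η) / ω` of `Γ` tends to `η / ω`. Since `Γ` has at worst a
simple pole there, `|log ‖Γ z‖| ≤ C + |log ‖z - η / ω‖| = C + |log ‖w / ω‖|`. The remaining
factors of `Λ` form `exp E` with `‖E‖ ≤ C' + B |log ‖w‖|`, because `‖Log w‖ ≤ |log ‖w‖| + π`.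
So `|log ‖Λ‖| ≤ C + K |log ‖w‖|`, which is `< (K + 1) |log ‖w‖|` once `‖w‖` is small. -/

/-- The modified gamma function
`Λ(w,η|ω) = (2π)^{−1/2} · Γ((w+η)/ω) · exp(w/ω) · exp((1/2 − (w+η)/ω)·(Log w − Log ω))`,
where `Log` is the principal branch of the logarithm. -/
noncomputable def Lambda (w η ω : ℂ) : ℂ :=
  (Real.sqrt (2 * Real.pi) : ℂ)⁻¹ * Complex.Gamma ((w + η) / ω) * Complex.exp (w / ω) *
    Complex.exp ((1 / 2 - (w + η) / ω) * (Complex.log w - Complex.log ω))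

open Complex Filter Topology

lemma Real.rpow_lt_and_lt_rpow_neg_of_abs_log_lt {x y k : ℝ} (hx : 0 < x) (hy : 0 < y)
    (h : |Real.log y| < -(k * Real.log x)) : x ^ k < y ∧ y < x ^ (-k) := by
  obtain ⟨h₁, h₂⟩ := abs_lt.mp h
  constructor
  · rw [← Real.log_lt_log_iff (Real.rpow_pos_of_pos hx k) hy, Real.log_rpow hx]
    linarith
  · rw [← Real.log_lt_log_iff hy (Real.rpow_pos_of_pos hx _), Real.log_rpow hx]
    linarith

lemma Real.abs_log_div_le (x y : ℝ) : |Real.log (x / y)| ≤ |Real.log x| + |Real.log y| := by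
  rcases eq_or_ne x 0 with rfl | hx
  · simp
  rcases eq_or_ne y 0 with rfl | hy
  · simp
  rw [Real.log_div hx hy]
  exact abs_sub _ _

lemma ContinuousAt.exists_eventually_abs_log_norm_le {X E : Type*} [TopologicalSpace X]
    [NormedAddCommGroup E] {f : X → E} {x : X} (hf : ContinuousAt f x) (hx : f x ≠ 0) :
    ∃ C, ∀ᶠ y in 𝓝 x, |Real.log ‖f y‖| ≤ C :=
  ⟨_, (hf.norm.log (norm_ne_zero_iff.mpr hx)).abs.eventually (eventually_le_nhds (lt_add_one _))⟩

namespace Complex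

lemma norm_log_le (z : ℂ) : ‖log z‖ ≤ |Real.log ‖z‖| + Real.pi := by
  have h := norm_le_abs_re_add_abs_im (log z)
  rw [log_re, log_im] at h
  linarith [abs_arg_le_pi z]

lemma Gamma_add_nat_add_one_eq {z : ℂ} (hz : ∀ m : ℕ, z ≠ -m) (n : ℕ) :
    Gamma (z + (n + 1 : ℕ)) = Gamma z * ((ascPochhammer ℂ n).eval z * (z + n)) := by
  rw [← ascPochhammer_succ_eval, ← Gamma_add_nat_div_Gamma_eq z hz,
    mul_div_cancel₀ _ (Gamma_ne_zero hz)]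

/-- The coefficient `1` of `|log ‖z - z₀‖|` reflects that the poles of `Γ` are simple. -/
lemma exists_abs_log_norm_Gamma_le (z₀ : ℂ) :
    ∃ C, ∀ᶠ z in 𝓝 z₀, (∀ m : ℕ, z ≠ -(m : ℂ)) →
      |Real.log ‖Gamma z‖| ≤ C + |Real.log ‖z - z₀‖| := by
  by_cases hpole : ∃ n : ℕ, z₀ = -(n : ℂ)
  · obtain ⟨n, rfl⟩ := hpole
    -- `Γ z * (z + n)` extends continuously and without zero across the pole `-n`
    set h : ℂ → ℂ := fun z => Gamma (z + (n + 1 : ℕ)) / (ascPochhammer ℂ n).eval z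
    have hP : ∀ z : ℂ, (∀ m : ℕ, z ≠ -m) → (ascPochhammer ℂ n).eval z ≠ 0 := by
      intro z hz
      rw [Ne, ascPochhammer_eval_eq_zero_iff]
      rintro ⟨k, -, hk⟩
      exact hz k (by rw [hk, neg_neg])
    have hPn : (ascPochhammer ℂ n).eval (-n : ℂ) ≠ 0 := by
      rw [Ne, ascPochhammer_eval_eq_zero_iff]
      rintro ⟨k, hk, hkn⟩
      rw [neg_neg, Nat.cast_inj] at hkn
      omega
    have h1 : (-n : ℂ) + (n + 1 : ℕ) = 1 := by push_cast; ring
    have hΓ : ContinuousAt (fun z : ℂ => Gamma (z + (n + 1 : ℕ))) (-n) :=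
      differentiableAt_Gamma_one.continuousAt.comp_of_eq (by fun_prop) h1
    have hh : ContinuousAt h (-n) := hΓ.div (Polynomial.continuousAt _) hPn
    have hh0 : h (-n) ≠ 0 := div_ne_zero (Gamma_ne_zero_of_re_pos (by simp)) hPn
    obtain ⟨C, hC⟩ := hh.exists_eventually_abs_log_norm_le hh0
    refine ⟨C, hC.mono fun z hCz hz => ?_⟩
    have hzn : z - -n ≠ 0 := sub_ne_zero.mpr (hz n)
    have hΓz : Gamma z = h z / (z - -n) := by
      rw [eq_div_iff hzn, eq_div_iff (hP z hz), Gamma_add_nat_add_one_eq hz]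
      ring
    rw [hΓz, norm_div]
    linarith [Real.abs_log_div_le ‖h z‖ ‖z - -n‖]
  · have hpole : ∀ m : ℕ, z₀ ≠ -m := not_exists.mp hpole
    obtain ⟨C, hC⟩ := (continuousAt_Gamma _ hpole).exists_eventually_abs_log_norm_le
      (Gamma_ne_zero hpole)
    exact ⟨C, hC.mono fun z hCz _ => hCz.trans (le_add_of_nonneg_right (abs_nonneg _))⟩

end Complex

noncomputable def lambdaExponent (w η ω : ℂ) : ℂ :=
  w / ω + (1 / 2 - (w + η) / ω) * (log w - log ω) - log (Real.sqrt (2 * Real.pi))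

lemma Lambda_eq_Gamma_mul_exp (w η ω : ℂ) :
    Lambda w η ω = Gamma ((w + η) / ω) * exp (lambdaExponent w η ω) := by
  have hsqrt : (Real.sqrt (2 * Real.pi) : ℂ) ≠ 0 := by
    exact_mod_cast (Real.sqrt_pos.mpr (by positivity)).ne'
  rw [Lambda, lambdaExponent, exp_sub, exp_add, exp_log hsqrt]
  ring

lemma Lambda_ne_zero {w η ω : ℂ} (hpole : ∀ n : ℕ, (w + η) / ω ≠ -(n : ℂ)) :
    Lambda w η ω ≠ 0 := by
  rw [Lambda_eq_Gamma_mul_exp]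
  exact mul_ne_zero (Gamma_ne_zero hpole) (exp_ne_zero _)

lemma exists_norm_lambdaExponent_le (η ω : ℂ) :
    ∃ C K, 0 ≤ K ∧ ∀ᶠ w in 𝓝 0, ‖lambdaExponent w η ω‖ ≤ C + K * |Real.log ‖w‖| := by
  set B := ‖1 / 2 - η / ω‖ + 1
  have hsmall : ∀ᶠ w : ℂ in 𝓝 0, ‖w / ω‖ ≤ 1 :=
    (show ContinuousAt (fun w : ℂ => ‖w / ω‖) 0 by fun_prop).eventually
      (eventually_le_nhds (by simp))
  have hbdd : ∀ᶠ w : ℂ in 𝓝 0, ‖1 / 2 - (w + η) / ω‖ ≤ B :=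
    (show ContinuousAt (fun w : ℂ => ‖1 / 2 - (w + η) / ω‖) 0 by fun_prop).eventually
      (eventually_le_nhds (by simp [B]))
  refine ⟨1 + B * (Real.pi + ‖log ω‖) + ‖log (Real.sqrt (2 * Real.pi))‖, B, by positivity, ?_⟩
  filter_upwards [hsmall, hbdd] with w hw hB
  have hlog : ‖log w - log ω‖ ≤ |Real.log ‖w‖| + Real.pi + ‖log ω‖ :=
    (norm_sub_le _ _).trans (by linarith [norm_log_le w])
  calc ‖lambdaExponent w η ω‖
        ≤ ‖w / ω‖ + ‖1 / 2 - (w + η) / ω‖ * ‖log w - log ω‖ + ‖log (Real.sqrt (2 * Real.pi))‖ :=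
        (norm_sub_le _ _).trans (by gcongr; exact (norm_add_le _ _).trans_eq (by rw [norm_mul]))
    _ ≤ 1 + B * (|Real.log ‖w‖| + Real.pi + ‖log ω‖) + ‖log (Real.sqrt (2 * Real.pi))‖ := by
        gcongr
    _ = _ := by ring

lemma exists_abs_log_norm_Lambda_le (η ω : ℂ) :
    ∃ C K, 0 ≤ K ∧ ∀ᶠ w in 𝓝 0, (∀ n : ℕ, (w + η) / ω ≠ -(n : ℂ)) →
      |Real.log ‖Lambda w η ω‖| ≤ C + K * |Real.log ‖w‖| := by
  obtain ⟨C₁, hΓ⟩ := exists_abs_log_norm_Gamma_le (η / ω)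
  obtain ⟨C₂, K, hK, hexp⟩ := exists_norm_lambdaExponent_le η ω
  have hz : Tendsto (fun w : ℂ => (w + η) / ω) (𝓝 0) (𝓝 (η / ω)) := by
    simpa using (show ContinuousAt (fun w : ℂ => (w + η) / ω) 0 by fun_prop).tendsto
  refine ⟨C₁ + |Real.log ‖ω‖| + C₂, K + 1, by positivity, ?_⟩
  filter_upwards [hz.eventually hΓ, hexp] with w hΓw hexpw hpole
  have hsplit : Real.log ‖Lambda w η ω‖ =
      Real.log ‖Gamma ((w + η) / ω)‖ + (lambdaExponent w η ω).re := by
    rw [Lambda_eq_Gamma_mul_exp, norm_mul, norm_exp,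
      Real.log_mul (norm_ne_zero_iff.mpr (Gamma_ne_zero hpole)) (Real.exp_pos _).ne', Real.log_exp]
  have hΓbound := hΓw hpole
  rw [show (w + η) / ω - η / ω = w / ω by ring, norm_div] at hΓbound
  calc |Real.log ‖Lambda w η ω‖|
        ≤ |Real.log ‖Gamma ((w + η) / ω)‖| + ‖lambdaExponent w η ω‖ := by
        rw [hsplit]
        exact (abs_add_le _ _).trans (by gcongr; exact abs_re_le_norm _)
    _ ≤ _ := by linarith [Real.abs_log_div_le ‖w‖ ‖ω‖]

theorem lambda_bounded_near_zero_general (ω : ℂ) (η : ℂ) :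
    ∃ k : ℝ, 0 < k ∧ ∃ δ : ℝ, 0 < δ ∧
      ∀ w : ℂ, w ∈ Complex.slitPlane → 0 < ‖w‖ → ‖w‖ < δ →
        (∀ n : ℕ, (w + η) / ω ≠ -(n : ℂ)) →
          ‖w‖ ^ k < ‖Lambda w η ω‖ ∧ ‖Lambda w η ω‖ < ‖w‖ ^ (-k) := by
  obtain ⟨C, K, hK, hbound⟩ := exists_abs_log_norm_Lambda_le η ω
  obtain ⟨δ, hδ, hball⟩ := Metric.eventually_nhds_iff.mp hbound
  refine ⟨K + 1, by positivity, min δ (min 1 (Real.exp (-C))), by positivity, ?_⟩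
  intro w _ hw₀ hwδ hpole
  obtain ⟨hwδ, hw₁, hwC⟩ : ‖w‖ < δ ∧ ‖w‖ < 1 ∧ ‖w‖ < Real.exp (-C) := by
    simpa only [lt_min_iff] using hwδ
  have hlog₁ : Real.log ‖w‖ < 0 := Real.log_neg hw₀ hw₁
  have hlogC : Real.log ‖w‖ < -C := (Real.log_lt_iff_lt_exp hw₀).mpr hwC
  have hΛ := hball (by rwa [dist_zero_right]) hpole
  rw [abs_of_neg hlog₁] at hΛ
  exact Real.rpow_lt_and_lt_rpow_neg_of_abs_log_lt hw₀
    (norm_pos_iff.mpr (Lambda_ne_zero hpole)) (by linarith)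

/-- Fix `ω ∈ ℂ ∖ ℝ_{≤0}` and `η ∈ ℂ`.  There exist real constants
`k > 0` and `δ > 0` such that for every `w ∈ ℂ ∖ ℝ_{≤0}` with `0 < |w| < δ` and with
`(w+η)/ω` not a nonpositive integer, one has `|w|^k < |Λ(w,η|ω)| < |w|^{−k}`. -/
theorem lambda_bounded_near_zero (ω : ℂ) (hω : ω ∈ Complex.slitPlane) (η : ℂ) :
    ∃ k : ℝ, 0 < k ∧ ∃ δ : ℝ, 0 < δ ∧
      ∀ w : ℂ, w ∈ Complex.slitPlane → 0 < ‖w‖ → ‖w‖ < δ →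
        (∀ n : ℕ, (w + η) / ω ≠ -(n : ℂ)) →
          ‖w‖ ^ k < ‖Lambda w η ω‖ ∧ ‖Lambda w η ω‖ < ‖w‖ ^ (-k) :=
  lambda_bounded_near_zero_general ω η
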